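/- The closed unit ball of E = (⊕_{n=1}^∞ ℓ_2^n)_{c_0} is not an almost limited set: there is a disjoint weak* null sequence (f_n) in E' with sup_{x ∈ B_E} |f_n(x)| = 1 for all n. -/

import Mathlib

/-!
Pairing with `dg k` reads off the last coordinate of block `k`, which is bounded by the block
norm `‖x k‖`. Hence `⟨dg k, x⟩ → 0` for every `x ∈ E`, while `x = dg k` itself lies in the unit
ball of `E` and gives `⟨dg k, x⟩ = 1`. Disjointness holds because distinct `dg k` live in
distinct blocks.
-/

open Filter Topology

noncomputable section

/-- The `n`-th block: the Euclidean lattice `ℓ₂^(n+1)` (so `n` ranges over all positive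
dimensions). -/
abbrev Blk (n : ℕ) := EuclideanSpace ℝ (Fin (n + 1))

/-- Sequences of blocks; the ambient product in which `E`, `E'` and `E''` live. -/
abbrev PreE := ∀ n, Blk n

/-- The coordinatewise (lattice) order. -/
def ele (x y : PreE) : Prop := ∀ n i, x n i ≤ y n i

/-- Membership in `E = (⊕ ℓ₂ⁿ)_{c₀}`: block norms tend to zero. -/
def memE0 (x : PreE) : Prop := Tendsto (fun n => ‖x n‖) atTop (𝓝 0)

/-- Membership in `E' = (⊕ ℓ₂ⁿ)_{ℓ₁}`: block norms are summable. -/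
def memE1 (x : PreE) : Prop := Summable fun n => ‖x n‖

/-- The duality pairing `⟨f, x⟩ = Σₙ Σᵢ f n i * x n i`. -/
def pairE (f x : PreE) : ℝ := ∑' n, ∑ i, f n i * x n i

/-- `E'' = (⊕ ℓ₂ⁿ)_{ℓ_∞}`, the ℓ∞-sum, as a genuine Banach space. -/
abbrev Epp := ↥(lp Blk ⊤)

/-- The diagonal unit vectors: `dg n` is `1` in the last coordinate of block `n`, `0` elsewhere. -/
def dg (n : ℕ) : PreE := fun m => if m = n then EuclideanSpace.single (Fin.last m) 1 else 0

lemma abs_apply_le_norm {ι : Type*} [Fintype ι] (y : EuclideanSpace ℝ ι) (i : ι) :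
    |y i| ≤ ‖y‖ :=
  (Real.norm_eq_abs _).symm.trans_le (PiLp.norm_apply_le y i)

lemma dg_of_ne {k m : ℕ} (h : m ≠ k) : dg k m = 0 := by
  simp [dg, h]

lemma norm_dg (k m : ℕ) : ‖dg k m‖ = if m = k then 1 else 0 := by
  rcases eq_or_ne m k with rfl | h
  · simp [dg]
  · simp [dg_of_ne h, h]

lemma pairE_dg (k : ℕ) (x : PreE) : pairE (dg k) x = x k (Fin.last k) := by
  rw [pairE, tsum_eq_single k fun n hn => by simp [dg_of_ne hn]]
  simp [dg]

lemma memE1_dg (k : ℕ) : memE1 (dg k) :=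
  summable_of_ne_finset_zero (s := {k}) fun m hm => by
    simp [norm_dg, Finset.mem_singleton.not.mp hm]

lemma memE0_dg (k : ℕ) : memE0 (dg k) :=
  tendsto_const_nhds.congr' <| (eventually_gt_atTop k).mono fun m hm => by
    simp [norm_dg, hm.ne']

lemma norm_dg_le_one (k n : ℕ) : ‖dg k n‖ ≤ 1 := by
  rw [norm_dg]; split_ifs <;> norm_num

lemma dg_disjoint : Pairwise fun k j => ∀ n i, min |dg k n i| |dg j n i| = 0 := by
  intro k j hkj n i
  rcases eq_or_ne n k with rfl | hn
  · simp [dg_of_ne hkj]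
  · simp [dg_of_ne hn]

lemma tendsto_pairE_dg {x : PreE} (hx : memE0 x) :
    Tendsto (fun k => pairE (dg k) x) atTop (𝓝 0) := by
  simp only [pairE_dg]
  exact squeeze_zero_norm (fun k => abs_apply_le_norm (x k) _) hx

lemma isGreatest_abs_pairE_dg (k : ℕ) :
    IsGreatest ((fun x => |pairE (dg k) x|) '' {x : PreE | memE0 x ∧ ∀ n, ‖x n‖ ≤ 1}) 1 := by
  refine ⟨⟨dg k, ⟨memE0_dg k, norm_dg_le_one k⟩, ?_⟩, ?_⟩
  · simp [pairE_dg, dg]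
  · rintro _ ⟨x, ⟨-, hx⟩, rfl⟩
    simp only [pairE_dg]
    exact (abs_apply_le_norm _ _).trans (hx k)

/-- The closed unit ball of `E = (⊕ ℓ₂ⁿ)_{c₀}` is not almost limited: the diagonal coordinate
functionals `(dg k) ⊆ E'` form a disjoint weak* null sequence with
`sup_{x ∈ B_E} |⟨dg k, x⟩| = 1` for all `k`. -/
theorem stmt_18 :
    (∀ k, memE1 (dg k)) ∧
    (Pairwise fun k j => ∀ n i, min |dg k n i| |dg j n i| = 0) ∧
    (∀ x : PreE, memE0 x → Tendsto (fun k => pairE (dg k) x) atTop (𝓝 0)) ∧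
    (∀ k, sSup ((fun x => |pairE (dg k) x|) '' {x : PreE | memE0 x ∧ ∀ n, ‖x n‖ ≤ 1}) = 1) :=
  ⟨memE1_dg, dg_disjoint, fun _ => tendsto_pairE_dg, fun k => (isGreatest_abs_pairE_dg k).csSup_eq⟩
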